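/- If M is a set of mentions whose separator sequence σ satisfies |σ_k| ≤ 1 for all gaps k (no gap carries two or more markers), and moreover no two distinct mentions of M share a start position or share an end position, then the mentions of M are pairwise disjoint. -/

import Mathlib

inductive Marker | S | E | C
deriving DecidableEq

/-- Separator sequence of a set of mentions (intervals). Gap `k` lies between word `k` and word `k+1`. -/
def sep (M : Set (ℕ × ℕ)) (k : ℕ) : Set Marker :=
  {m | (m = Marker.S ∧ ∃ p ∈ M, p.1 = k + 1) ∨
       (m = Marker.E ∧ ∃ p ∈ M, p.2 = k) ∨
       (m = Marker.C ∧ ∃ p ∈ M, p.1 ≤ k ∧ k + 1 ≤ p.2)}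

/-- `M` is a set of mentions over a sentence of `n` words. -/
def Valid (n : ℕ) (M : Set (ℕ × ℕ)) : Prop :=
  ∀ p ∈ M, 1 ≤ p.1 ∧ p.1 ≤ p.2 ∧ p.2 ≤ n

/-! A mention that starts strictly inside another one would put both `S` and `C` on the gap just
before its first word. Hence, once distinct mentions have distinct starts, the mention that starts
first must end before the other begins. -/

namespace Marker

variable {M : Set (ℕ × ℕ)} {p : ℕ × ℕ} {k : ℕ}

theorem S_mem_sep (hp : p ∈ M) (hk : p.1 = k + 1) : S ∈ sep M k :=
  Or.inl ⟨rfl, p, hp, hk⟩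

theorem C_mem_sep (hp : p ∈ M) (hstart : p.1 ≤ k) (hend : k + 1 ≤ p.2) : C ∈ sep M k :=
  Or.inr <| Or.inr ⟨rfl, p, hp, hstart, hend⟩

end Marker

theorem end_lt_start_of_start_lt {M : Set (ℕ × ℕ)} (hsub : ∀ k, (sep M k).Subsingleton)
    {p q : ℕ × ℕ} (hp : p ∈ M) (hq : q ∈ M) (hlt : p.1 < q.1) : p.2 < q.1 := by
  by_contra! hle
  have hS : Marker.S ∈ sep M (q.1 - 1) := Marker.S_mem_sep hq (by omega)
  have hC : Marker.C ∈ sep M (q.1 - 1) := Marker.C_mem_sep hp (by omega) (by omega)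
  exact Marker.noConfusion (hsub _ hC hS)

theorem single_markers_imply_disjoint_general (M : Set (ℕ × ℕ))
    (hsub : ∀ k, (sep M k).Subsingleton)
    (hbound : ∀ p ∈ M, ∀ q ∈ M, p ≠ q → p.1 ≠ q.1 ∧ p.2 ≠ q.2) :
    ∀ p ∈ M, ∀ q ∈ M, p ≠ q → p.2 < q.1 ∨ q.2 < p.1 := by
  intro p hp q hq hne
  rcases (hbound p hp q hq hne).1.lt_or_gt with hlt | hgt
  · exact Or.inl (end_lt_start_of_start_lt hsub hp hq hlt)
  · exact Or.inr (end_lt_start_of_start_lt hsub hq hp hgt)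

theorem single_markers_imply_disjoint (n : ℕ) (M : Set (ℕ × ℕ)) (hM : Valid n M)
    (hsub : ∀ k, (sep M k).Subsingleton)
    (hbound : ∀ p ∈ M, ∀ q ∈ M, p ≠ q → p.1 ≠ q.1 ∧ p.2 ≠ q.2) :
    ∀ p ∈ M, ∀ q ∈ M, p ≠ q → p.2 < q.1 ∨ q.2 < p.1 :=
  single_markers_imply_disjoint_general M hsub hbound
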